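/- arXiv:2211.01295 — 5 statements merged into one kernel-verified Lean document; each statement's English description precedes it below -/
import Mathlib

section
/- Let n ∈ ℕ, let Γ be a subgroup of the permutations of Fin n, let F ⊆ (Fin n → ℝ) satisfy γ • F = F for all γ ∈ Γ, and let f : (Fin n → ℝ) → ℝ satisfy f (γ • x) = f x for all γ ∈ Γ and all x. Define X_Γ = { x : Fin n → ℝ | ∀ γ ∈ Γ, x ⪰ γ • x }. Then: (a) for every x ∈ F there exists ξ ∈ Γ with ξ • x ∈ F ∩ X_Γ; and (b) the image f '' F equals f '' (F ∩ X_Γ); in particular, minimizing f over F and over F ∩ X_Γ yields the same set of attained objective values and the same feasibility status. -/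
/-- Action of a permutation of `Fin n` on vectors `x : Fin n → ℝ`:
`(γ • x) i = x (γ⁻¹ i)`. -/
def pact {n : ℕ} (γ : Equiv.Perm (Fin n)) (x : Fin n → ℝ) : Fin n → ℝ :=
  fun i => x (γ⁻¹ i)

/-- Lexicographic order `u ⪰ v` on `Fin m → ℝ`. -/
def lexGe {m : ℕ} (u v : Fin m → ℝ) : Prop :=
  u = v ∨ ∃ k : Fin m, (∀ i : Fin m, i < k → u i = v i) ∧ v k < u k

/-! Γ is finite, so the orbit of `x` has a lexicographically largest point `ξ • x`; it dominates
every `γ • (ξ • x) = (γ ξ) • x`, and it lies in `F` and has the same `f`-value by invariance. -/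

lemma pact_mul {n : ℕ} (γ ξ : Equiv.Perm (Fin n)) (x : Fin n → ℝ) :
    pact (γ * ξ) x = pact γ (pact ξ x) := by
  funext i
  simp [pact, mul_inv_rev]

lemma lexGe_iff_toLex_le {m : ℕ} (u v : Fin m → ℝ) : lexGe u v ↔ toLex v ≤ toLex u := by
  rw [le_iff_lt_or_eq, toLex_inj, eq_comm, or_comm]
  exact or_congr Iff.rfl
    ⟨fun ⟨k, hk, hlt⟩ => ⟨k, fun i hi => (hk i hi).symm, hlt⟩,
      fun ⟨k, hk, hlt⟩ => ⟨k, fun i hi => (hk i hi).symm, hlt⟩⟩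

lemma exists_mem_forall_lexGe_pact {n : ℕ} (Γ : Subgroup (Equiv.Perm (Fin n)))
    (x : Fin n → ℝ) : ∃ ξ ∈ Γ, ∀ γ ∈ Γ, lexGe (pact ξ x) (pact γ (pact ξ x)) := by
  obtain ⟨ξ, hξ, hmax⟩ := Set.exists_max_image (Γ : Set (Equiv.Perm (Fin n)))
    (fun γ => toLex (pact γ x)) (Set.toFinite _) ⟨1, Γ.one_mem⟩
  refine ⟨ξ, hξ, fun γ hγ => ?_⟩
  rw [lexGe_iff_toLex_le, ← pact_mul]
  exact hmax _ (Γ.mul_mem hγ hξ)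

lemma pact_mem_of_image_eq {n : ℕ} {F : Set (Fin n → ℝ)} {ξ : Equiv.Perm (Fin n)}
    (hF : pact ξ '' F = F) {x : Fin n → ℝ} (hx : x ∈ F) : pact ξ x ∈ F :=
  hF ▸ Set.mem_image_of_mem _ hx

theorem stmt0 (n : ℕ) (Γ : Subgroup (Equiv.Perm (Fin n)))
    (F : Set (Fin n → ℝ)) (hF : ∀ γ ∈ Γ, pact γ '' F = F)
    (f : (Fin n → ℝ) → ℝ) (hf : ∀ γ ∈ Γ, ∀ x : Fin n → ℝ, f (pact γ x) = f x) :
    (∀ x ∈ F, ∃ ξ ∈ Γ, pact ξ x ∈ F ∩ {x | ∀ γ ∈ Γ, lexGe x (pact γ x)}) ∧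
      f '' F = f '' (F ∩ {x | ∀ γ ∈ Γ, lexGe x (pact γ x)}) ∧
      (F = ∅ ↔ F ∩ {x | ∀ γ ∈ Γ, lexGe x (pact γ x)} = ∅) := by
  have leader : ∀ x ∈ F, ∃ ξ ∈ Γ, pact ξ x ∈ F ∩ {x | ∀ γ ∈ Γ, lexGe x (pact γ x)} := by
    intro x hx
    obtain ⟨ξ, hξ, hlex⟩ := exists_mem_forall_lexGe_pact Γ x
    exact ⟨ξ, hξ, pact_mem_of_image_eq (hF ξ hξ) hx, hlex⟩
  refine ⟨leader, ?_, ?_⟩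
  · refine (Set.image_mono Set.inter_subset_left).antisymm' ?_
    rintro _ ⟨x, hx, rfl⟩
    obtain ⟨ξ, hξ, hmem⟩ := leader x hx
    exact ⟨pact ξ x, hmem, hf ξ hξ x⟩
  · refine ⟨fun h => by rw [h, Set.empty_inter], fun h => ?_⟩
    refine Set.eq_empty_of_forall_notMem fun x hx => ?_
    obtain ⟨ξ, -, hmem⟩ := leader x hx
    exact h.subset hmem
end

section
/- Let n, m ∈ ℕ with m ≤ n, let π be a permutation of Fin n, let B₀, B₁ be disjoint subsets of Fin n with B₀ ∪ B₁ = { i : Fin n | (π i : ℕ) < m }, and let Γ be a subgroup of the permutations of Fin n. Let x̄ : Fin n → ℝ satisfy x̄ i ∈ {0,1} for all i, x̄ i = 1 for all i ∈ B₁, x̄ i = 0 for all i ∈ B₀, and suppose (π • x̄)|m ⪰ (π • (γ • x̄))|m for every γ ∈ Γ. Then for every γ ∈ Γ with γ '' B₁ = B₁ and every i ∈ B₀, x̄ (γ⁻¹ i) = 0. -/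
/-- Restriction of `z : Fin n → ℝ` to its first `m` coordinates. -/
def restr {n : ℕ} (m : ℕ) (h : m ≤ n) (z : Fin n → ℝ) : Fin m → ℝ :=
  fun k => z (Fin.castLE h k)

/-!
If `γ` fixes `B₁` setwise, then on every branched coordinate `π • x` is pointwise below
`π • (γ • x)`: on `B₁` both are `1`, on `B₀` the left side is `0`. A vector that is
lexicographically at least a pointwise larger one must equal it, so `π • x` and `π • (γ • x)`
agree on the first `m` coordinates, in particular at position `π i` for `i ∈ B₀`.
-/

theorem lexGe.eq_of_le {m : ℕ} {u v : Fin m → ℝ} (h : lexGe u v) (hle : u ≤ v) : u = v := by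
  rcases h with huv | ⟨k, -, hlt⟩
  · exact huv
  · exact absurd (hle k) (not_le.mpr hlt)

theorem Equiv.Perm.inv_mem_of_image_eq {α : Type*} {γ : Equiv.Perm α} {B : Set α}
    (hB : (γ : α → α) '' B = B) {j : α} (hj : j ∈ B) : γ⁻¹ j ∈ B := by
  rw [← hB] at hj
  obtain ⟨a, ha, rfl⟩ := hj
  simpa using ha

theorem le_apply_inv_of_mem_union {α : Type*} {B₀ B₁ : Set α} {x : α → ℝ}
    (hnonneg : ∀ i, 0 ≤ x i) (hx1 : ∀ i ∈ B₁, x i = 1) (hx0 : ∀ i ∈ B₀, x i = 0)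
    {γ : Equiv.Perm α} (hγ : (γ : α → α) '' B₁ = B₁) {j : α} (hj : j ∈ B₀ ∪ B₁) :
    x j ≤ x (γ⁻¹ j) := by
  rcases hj with hj₀ | hj₁
  · rw [hx0 j hj₀]
    exact hnonneg _
  · rw [hx1 j hj₁, hx1 _ (γ.inv_mem_of_image_eq hγ hj₁)]

theorem stmt2_general (n m : ℕ) (hmn : m ≤ n) (π : Equiv.Perm (Fin n))
    (B₀ B₁ : Set (Fin n))
    (hcover : B₀ ∪ B₁ = {i : Fin n | (π i : ℕ) < m})
    (Γ : Subgroup (Equiv.Perm (Fin n)))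
    (x : Fin n → ℝ) (hx01 : ∀ i, x i = 0 ∨ x i = 1)
    (hx1 : ∀ i ∈ B₁, x i = 1) (hx0 : ∀ i ∈ B₀, x i = 0)
    (hshc : ∀ γ ∈ Γ,
      lexGe (restr m hmn (pact π x)) (restr m hmn (pact π (pact γ x)))) :
    ∀ γ ∈ Γ, (γ : Fin n → Fin n) '' B₁ = B₁ → ∀ i ∈ B₀, x (γ⁻¹ i) = 0 := by
  intro γ hγ hB₁ i hi
  have hnonneg : ∀ i, 0 ≤ x i := fun i => by rcases hx01 i with h | h <;> simp [h]
  have hle : restr m hmn (pact π x) ≤ restr m hmn (pact π (pact γ x)) := fun k => by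
    have hk : π⁻¹ (Fin.castLE hmn k) ∈ B₀ ∪ B₁ := by simp [hcover]
    exact le_apply_inv_of_mem_union hnonneg hx1 hx0 hB₁ hk
  have hiπ : (π i : ℕ) < m := by
    have hi' := Set.mem_union_left B₁ hi
    rwa [hcover] at hi'
  have hagree := congrFun ((hshc γ hγ).eq_of_le hle) ⟨π i, hiπ⟩
  simpa [restr, pact, hx0 i hi] using hagree.symm

theorem stmt2 (n m : ℕ) (hmn : m ≤ n) (π : Equiv.Perm (Fin n))
    (B₀ B₁ : Set (Fin n)) (hdisj : Disjoint B₀ B₁)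
    (hcover : B₀ ∪ B₁ = {i : Fin n | (π i : ℕ) < m})
    (Γ : Subgroup (Equiv.Perm (Fin n)))
    (x : Fin n → ℝ) (hx01 : ∀ i, x i = 0 ∨ x i = 1)
    (hx1 : ∀ i ∈ B₁, x i = 1) (hx0 : ∀ i ∈ B₀, x i = 0)
    (hshc : ∀ γ ∈ Γ,
      lexGe (restr m hmn (pact π x)) (restr m hmn (pact π (pact γ x)))) :
    ∀ γ ∈ Γ, (γ : Fin n → Fin n) '' B₁ = B₁ → ∀ i ∈ B₀, x (γ⁻¹ i) = 0 :=
  stmt2_general n m hmn π B₀ B₁ hcover Γ x hx01 hx1 hx0 hshc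
end

section
/- Let n, m ∈ ℕ, Γ a subgroup of the permutations of Fin n, and τ : Fin m → Fin n an injective map; define σ : (Fin n → ℝ) → (Fin m → ℝ) by σ(x) = x ∘ τ. Let S ⊆ (Fin n → ℝ) satisfy γ • S = S for all γ ∈ Γ. Let B ⊆ (Fin n → ℝ) be determined by the coordinates in the range of τ, i.e., whenever x ∈ B and x' : Fin n → ℝ satisfies x' (τ k) = x (τ k) for all k, then x' ∈ B. Let W = { x | ∀ γ ∈ Γ, σ(x) ⪰ σ(γ • x) } and F = S ∩ B ∩ W. Then F satisfies condition (C4): for every x ∈ F and ξ ∈ Γ with σ(x) = σ(ξ • x), also ξ • x ∈ F. -/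
/-- The branching-based symmetry prehandling structure satisfies condition
(C4): with `σ x = x ∘ τ`, a `Γ`-invariant set `S`, a set `B` determined by the
coordinates in the range of `τ`, and `W` the set of solutions respecting the
symmetry handling constraints, the set `F = S ∩ B ∩ W` satisfies (C4). -/
theorem stmt5 (n m : ℕ) (Γ : Subgroup (Equiv.Perm (Fin n)))
    (τ : Fin m → Fin n) (hτ : Function.Injective τ)
    (S : Set (Fin n → ℝ)) (hS : ∀ γ ∈ Γ, pact γ '' S = S)
    (B : Set (Fin n → ℝ))
    (hB : ∀ x ∈ B, ∀ x' : Fin n → ℝ, (∀ k : Fin m, x' (τ k) = x (τ k)) → x' ∈ B) :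
    ∀ x ∈ S ∩ B ∩ {x : Fin n → ℝ | ∀ γ ∈ Γ, lexGe (x ∘ τ) (pact γ x ∘ τ)},
      ∀ ξ ∈ Γ, x ∘ τ = pact ξ x ∘ τ →
        pact ξ x ∈ S ∩ B ∩ {x : Fin n → ℝ | ∀ γ ∈ Γ, lexGe (x ∘ τ) (pact γ x ∘ τ)} := by
  rintro x ⟨⟨hxS, hxB⟩, hxW⟩ ξ hξ hσ
  have hcomp : ∀ γ δ : Equiv.Perm (Fin n), pact γ (pact δ x) = pact (γ * δ) x := by
    intro γ δ; funext i; simp [pact]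
  refine ⟨⟨?_, ?_⟩, ?_⟩
  · rw [← hS ξ hξ]; exact ⟨x, hxS, rfl⟩
  · exact hB x hxB _ (fun k => (congrFun hσ k).symm)
  · intro γ hγ
    have : (pact ξ x) ∘ τ = x ∘ τ := hσ.symm
    rw [this, hcomp]
    exact hxW (γ * ξ) (mul_mem hγ hξ)
end

section
/- If F satisfies condition (C4), then for every x ∈ F ∩ W and every γ ∈ Δ: σ(γ • x) = σ(x) and γ • x ∈ F ∩ W. In particular, for every i ∈ Fin n one has (γ • x) (γ i) = x i, so the value x i is attained at coordinate γ i by some element of F ∩ W; hence the domain of variable i may validly be reduced to the intersection of the coordinate projections of F ∩ W over the Δ-orbit of i. -/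
/-- The set `W` of solutions respecting the symmetry handling constraints
`σ(x) ⪰ σ(δ • x)` for all `δ ∈ Γ`, where `σ(x) = x ∘ τ`. -/
def Wset (n m : ℕ) (Γ : Subgroup (Equiv.Perm (Fin n))) (τ : Fin m → Fin n) :
    Set (Fin n → ℝ) :=
  {x | ∀ δ ∈ Γ, lexGe (x ∘ τ) (pact δ x ∘ τ)}

/-- The set `Δ = { γ ∈ Γ | ∀ x ∈ F ∩ W, ∀ k, σ(x) k ≤ σ(γ • x) k }`. -/
def Dset (n m : ℕ) (Γ : Subgroup (Equiv.Perm (Fin n))) (τ : Fin m → Fin n)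
    (F : Set (Fin n → ℝ)) : Set (Equiv.Perm (Fin n)) :=
  {γ | γ ∈ Γ ∧ ∀ x ∈ F ∩ Wset n m Γ τ, ∀ k : Fin m, (x ∘ τ) k ≤ (pact γ x ∘ τ) k}

/-- Condition (C4): for every `x ∈ F` and `ξ ∈ Γ` with `σ(x) = σ(ξ • x)`,
also `ξ • x ∈ F`. -/
def condC4 (n m : ℕ) (Γ : Subgroup (Equiv.Perm (Fin n))) (τ : Fin m → Fin n)
    (F : Set (Fin n → ℝ)) : Prop :=
  ∀ x ∈ F, ∀ ξ ∈ Γ, x ∘ τ = pact ξ x ∘ τ → pact ξ x ∈ F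

lemma key (n m : ℕ) (Γ : Subgroup (Equiv.Perm (Fin n)))
    (τ : Fin m → Fin n)
    (F : Set (Fin n → ℝ)) (hC4 : condC4 n m Γ τ F) :
    ∀ x ∈ F ∩ Wset n m Γ τ, ∀ γ ∈ Dset n m Γ τ F,
      (pact γ x ∘ τ = x ∘ τ) ∧ pact γ x ∈ F ∩ Wset n m Γ τ := by
  intro x hx γ hγ
  obtain ⟨hγΓ, hle⟩ := hγ
  have heq : x ∘ τ = pact γ x ∘ τ := by
    rcases hx.2 γ hγΓ with h | ⟨k, _, hk⟩
    · exact h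
    · exact absurd (hle x hx k) (not_le.mpr hk)
  have hF : pact γ x ∈ F := hC4 x hx.1 γ hγΓ heq
  refine ⟨heq.symm, hF, ?_⟩
  intro δ hδ
  have hcomp : pact δ (pact γ x) = pact (δ * γ) x := by
    funext i; simp [pact, mul_inv_rev]
  rw [hcomp, ← heq]
  exact hx.2 (δ * γ) (mul_mem hδ hγΓ)

/-- If `F` satisfies (C4), then for `x ∈ F ∩ W` and `γ ∈ Δ` we have
`σ(γ • x) = σ(x)` and `γ • x ∈ F ∩ W`; in particular `(γ • x) (γ i) = x i`,
so the value `x i` is attained at coordinate `γ i` by an element of `F ∩ W`,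
and hence `x i` lies in the projection of `F ∩ W` onto every coordinate `j`
in the `Δ`-orbit of `i`. -/
theorem stmt11 (n m : ℕ) (Γ : Subgroup (Equiv.Perm (Fin n)))
    (τ : Fin m → Fin n) (hτ : Function.Injective τ)
    (F : Set (Fin n → ℝ)) (hC4 : condC4 n m Γ τ F) :
    ∀ x ∈ F ∩ Wset n m Γ τ, ∀ γ ∈ Dset n m Γ τ F,
      (pact γ x ∘ τ = x ∘ τ) ∧
      pact γ x ∈ F ∩ Wset n m Γ τ ∧
      (∀ i : Fin n, pact γ x (γ i) = x i) ∧
      (∀ i j : Fin n, (∃ γ' ∈ Dset n m Γ τ F, γ' i = j) →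
        ∃ y ∈ F ∩ Wset n m Γ τ, y j = x i) := by

  intro x hx γ hγ
  obtain ⟨heq, hmem⟩ := key n m Γ τ F hC4 x hx γ hγ
  refine ⟨heq, hmem, fun i => by simp [pact], ?_⟩
  rintro i j ⟨γ', hγ', rfl⟩
  obtain ⟨_, hmem'⟩ := key n m Γ τ F hC4 x hx γ' hγ'
  exact ⟨pact γ' x, hmem', by simp [pact]⟩
end

section
/- Suppose every x ∈ F takes values in {0,1}, and suppose there exists c : Fin m → ℝ such that x (τ k) = c k for all x ∈ F and all k ∈ Fin m. Let B₁ = { τ k | k ∈ Fin m, c k = 1 } ⊆ Fin n. Then every γ ∈ Γ with γ '' B₁ = B₁ satisfies σ(x) k ≤ σ(γ • x) k for all x ∈ F and all k; in particular, the setwise stabilizer { γ ∈ Γ | γ '' B₁ = B₁ } is contained in Δ. -/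
/-- For binary problems where the branched variables `τ(k)` are fixed to the
values `c k` on `F`, every `γ ∈ Γ` stabilizing `B₁ = τ '' {k | c k = 1}`
satisfies `σ(x) k ≤ σ(γ • x) k` on `F`; in particular the setwise stabilizer
of `B₁` in `Γ` is contained in `Δ`. -/
theorem stmt12 (n m : ℕ) (Γ : Subgroup (Equiv.Perm (Fin n)))
    (τ : Fin m → Fin n) (hτ : Function.Injective τ)
    (F : Set (Fin n → ℝ))
    (hbin : ∀ x ∈ F, ∀ i : Fin n, x i = 0 ∨ x i = 1)
    (c : Fin m → ℝ) (hc : ∀ x ∈ F, ∀ k : Fin m, x (τ k) = c k)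
    (B₁ : Set (Fin n)) (hB₁ : B₁ = τ '' {k : Fin m | c k = 1}) :
    ∀ γ ∈ Γ, (γ : Fin n → Fin n) '' B₁ = B₁ →
      (∀ x ∈ F, ∀ k : Fin m, (x ∘ τ) k ≤ (pact γ x ∘ τ) k) ∧
      γ ∈ Dset n m Γ τ F := by
  intro γ hγ hstab
  have main : ∀ x ∈ F, ∀ k : Fin m, (x ∘ τ) k ≤ (pact γ x ∘ τ) k := by
    intro x hx k
    simp only [Function.comp, pact]
    have hxk : x (τ k) = c k := hc x hx k
    rcases hbin x hx (τ k) with h0 | h1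
    · rw [h0]
      rcases hbin x hx (γ⁻¹ (τ k)) with h | h <;> rw [h] <;> norm_num
    · -- c k = 1, so τ k ∈ B₁, so γ⁻¹ (τ k) ∈ B₁
      have hck : c k = 1 := by rw [← hxk, h1]
      have hmem : τ k ∈ B₁ := by
        rw [hB₁]; exact ⟨k, hck, rfl⟩
      have hinv : γ⁻¹ (τ k) ∈ B₁ := by
        rw [← hstab] at hmem
        rcases hmem with ⟨y, hy, hyy⟩
        have : γ⁻¹ (τ k) = y := by
          apply γ.injective; simp [hyy]
        rwa [this]
      rw [hB₁] at hinv
      rcases hinv with ⟨k', hk', hkk'⟩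
      rw [← hkk', hc x hx k', hk', h1]
  exact ⟨main, hγ, fun x hx k => main x hx.1 k⟩
end
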